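/- Let d̃ be a real-valued function on (x_L, x_R) and set D̃ = diag(d̃(x_1), …, d̃(x_M)). If either d̃ is convex and d̃ ≥ 0 on (x_L,x_R), or d̃ is concave and d̃ ≤ 0 on (x_L,x_R), then for every u ∈ ℝ^M: uᵀ D̃ G D̃ u ≤ 2 · (max_{1≤i≤M} |d̃(x_i)|²) · uᵀ G u. -/

import Mathlib

/-! With `c = maxᵢ d̃(xᵢ)²`, the matrix `2c G - D̃ G D̃` has entries `(2c - dᵢ dⱼ) Gᵢⱼ`. The matrix `G`
is symmetric Toeplitz; the sign pattern of the Grünwald weights makes its off-diagonal entries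
nonpositive and lets its diagonal dominate twice any partial sum along a row. Hence `2c G - D̃ G D̃`
is a symmetric matrix with nonpositive off-diagonal entries, and pairing the entries of row `i` at
distance `k` on both sides of `i`, the discrete convexity `d_{i-k} + d_{i+k} ≥ 2 dᵢ` shows that its
row sums are nonnegative. Such a matrix is positive semidefinite. The concave case is the convex
one for `-d̃`, which leaves `D̃ G D̃` unchanged. -/

open Matrix

/-- The Grünwald–Letnikov coefficients `g_k^{(α)}`. -/
noncomputable def gcoef (α : ℝ) : ℕ → ℝ
  | 0 => 1
  | (k+1) => (1 - (α + 1) / (k + 1 : ℕ)) * gcoef α k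

/-- The WSGD coefficients `w_k^{(α)}`. -/
noncomputable def wcoef (α : ℝ) : ℕ → ℝ
  | 0 => α / 2 * gcoef α 0
  | (k+1) => α / 2 * gcoef α (k+1) + (2 - α) / 2 * gcoef α k

/-- The `M × M` lower-Hessenberg Toeplitz matrix `G_α`. -/
noncomputable def Gmat (α : ℝ) (M : ℕ) : Matrix (Fin M) (Fin M) ℝ :=
  Matrix.of fun i j => if (j : ℕ) ≤ (i : ℕ) + 1 then wcoef α ((i : ℕ) + 1 - (j : ℕ)) else 0

open Finset

section Coefficients

variable {α : ℝ}

lemma gcoef_succ (k : ℕ) : gcoef α (k + 1) = (k - α) / (k + 1) * gcoef α k := by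
  rw [gcoef]; push_cast; field_simp; ring

lemma gcoef_one : gcoef α 1 = -α := by simp [gcoef]

lemma gcoef_two : gcoef α 2 = α * (α - 1) / 2 := by
  rw [gcoef_succ, gcoef_one]; push_cast; ring

lemma gcoef_nonneg (hα₁ : 1 ≤ α) (hα₂ : α ≤ 2) : ∀ k, 0 ≤ gcoef α (k + 2)
  | 0 => by rw [gcoef_two]; nlinarith
  | k + 1 => by
    rw [gcoef_succ]
    refine mul_nonneg (div_nonneg ?_ (by positivity)) (gcoef_nonneg hα₁ hα₂ k)
    push_cast; linarith

lemma mul_sum_range_gcoef (n : ℕ) : α * ∑ k ∈ range (n + 1), gcoef α k = (α - n) * gcoef α n := by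
  induction n with
  | zero => simp [gcoef]
  | succ n ih =>
    rw [sum_range_succ, mul_add, ih, gcoef_succ]
    push_cast; field_simp; ring

lemma sum_range_gcoef_nonpos (hα₁ : 1 ≤ α) (hα₂ : α ≤ 2) (n : ℕ) :
    ∑ k ∈ range (n + 2), gcoef α k ≤ 0 := by
  have hα : 0 < α := by linarith
  have h := mul_sum_range_gcoef (α := α) (n + 1)
  rcases n with _ | n
  · rw [gcoef_one] at h; norm_num at h ⊢; nlinarith
  · have := gcoef_nonneg hα₁ hα₂ n
    push_cast at h
    nlinarith

lemma sum_range_wcoef (n : ℕ) : ∑ k ∈ range (n + 2), wcoef α k =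
    α / 2 * ∑ k ∈ range (n + 2), gcoef α k + (2 - α) / 2 * ∑ k ∈ range (n + 1), gcoef α k := by
  rw [sum_range_succ' (wcoef α), sum_range_succ' (gcoef α)]
  simp only [wcoef, sum_add_distrib, ← mul_sum]
  ring

lemma sum_range_wcoef_nonpos (hα₁ : 1 ≤ α) (hα₂ : α ≤ 2) (n : ℕ) :
    ∑ k ∈ range (n + 3), wcoef α k ≤ 0 := by
  rw [sum_range_wcoef]
  have := sum_range_gcoef_nonpos hα₁ hα₂ (n + 1)
  have := sum_range_gcoef_nonpos hα₁ hα₂ n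
  nlinarith

end Coefficients

noncomputable def bandCoef (α : ℝ) : ℕ → ℝ
  | 0 => -(2 * wcoef α 1)
  | 1 => -(wcoef α 0 + wcoef α 2)
  | k + 2 => -wcoef α (k + 3)

def symmToeplitz (t : ℕ → ℝ) (M : ℕ) : Matrix (Fin M) (Fin M) ℝ :=
  of fun i j => t (Nat.dist i j)

section Band

variable {α : ℝ}

lemma bandCoef_dist (a b : ℕ) :
    -(if b ≤ a + 1 then wcoef α (a + 1 - b) else 0) - (if a ≤ b + 1 then wcoef α (b + 1 - a) else 0)
      = bandCoef α (Nat.dist a b) := by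
  rcases lt_trichotomy a b with hab | rfl | hab
  · obtain ⟨k, rfl⟩ := Nat.exists_eq_add_of_lt hab
    rw [Nat.dist_eq_sub_of_le (by omega), if_pos (by omega : a ≤ a + k + 1 + 1),
      show a + k + 1 + 1 - a = k + 2 by omega, show a + k + 1 - a = k + 1 by omega]
    rcases k with _ | k
    · rw [if_pos (by omega), show a + 1 - (a + 0 + 1) = 0 by omega]; simp only [bandCoef]; ring
    · rw [if_neg (by omega)]; simp only [bandCoef]; ring
  · simp [bandCoef]; ring
  · obtain ⟨k, rfl⟩ := Nat.exists_eq_add_of_lt hab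
    rw [Nat.dist_eq_sub_of_le_right (by omega), if_pos (by omega : b ≤ b + k + 1 + 1),
      show b + k + 1 + 1 - b = k + 2 by omega, show b + k + 1 - b = k + 1 by omega]
    rcases k with _ | k
    · rw [if_pos (by omega), show b + 1 - (b + 0 + 1) = 0 by omega]; simp only [bandCoef]; ring
    · rw [if_neg (by omega)]; simp only [bandCoef]; ring

lemma neg_Gmat_sub_transpose (M : ℕ) :
    -Gmat α M - (Gmat α M)ᵀ = symmToeplitz (bandCoef α) M := by
  ext i j
  simp only [Gmat, symmToeplitz, Matrix.sub_apply, Matrix.neg_apply, transpose_apply, of_apply]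
  exact bandCoef_dist i j

lemma bandCoef_succ_nonpos (hα₁ : 1 ≤ α) (hα₂ : α ≤ 2) : ∀ k, bandCoef α (k + 1) ≤ 0
  | 0 => by
    simp only [bandCoef, wcoef, gcoef]
    nlinarith [mul_nonneg (mul_nonneg (by linarith : 0 ≤ α) (by linarith : 0 ≤ α - 1))
      (by linarith : 0 ≤ α + 2)]
  | k + 1 => by
    simp only [bandCoef, wcoef, neg_nonpos]
    have := gcoef_nonneg hα₁ hα₂ (k + 1)
    have := gcoef_nonneg hα₁ hα₂ k
    have : 0 ≤ 2 - α := by linarith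
    positivity

lemma bandCoef_zero_add_two_mul_sum (N : ℕ) :
    bandCoef α 0 + 2 * ∑ k ∈ range (N + 1), bandCoef α (k + 1)
      = -2 * ∑ k ∈ range (N + 3), wcoef α k := by
  induction N with
  | zero => simp [sum_range_succ, bandCoef]; ring
  | succ N ih =>
    rw [sum_range_succ, sum_range_succ (wcoef α), mul_add, ← add_assoc, ih]
    simp only [bandCoef]; ring

lemma bandCoef_zero_add_two_mul_sum_nonneg (hα₁ : 1 ≤ α) (hα₂ : α ≤ 2) (N : ℕ) :
    0 ≤ bandCoef α 0 + 2 * ∑ k ∈ range N, bandCoef α (k + 1) := by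
  have hsum (N : ℕ) : 0 ≤ bandCoef α 0 + 2 * ∑ k ∈ range (N + 1), bandCoef α (k + 1) := by
    rw [bandCoef_zero_add_two_mul_sum]
    linarith [sum_range_wcoef_nonpos hα₁ hα₂ N]
  rcases N with _ | N
  · have h1 := hsum 0
    rw [zero_add, sum_range_one] at h1
    simp only [range_zero, sum_empty]
    linarith [bandCoef_succ_nonpos hα₁ hα₂ 0]
  · exact hsum N

end Band

section DiagonalDominance

variable {ι : Type*} [Fintype ι]

lemma dotProduct_mulVec_self_eq_of_isSymm {A : Matrix ι ι ℝ} (hA : A.IsSymm) (u : ι → ℝ) :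
    u ⬝ᵥ (A *ᵥ u) = ∑ i, (∑ j, A i j) * u i ^ 2 - (∑ i, ∑ j, A i j * (u i - u j) ^ 2) / 2 := by
  have hswap : ∑ i, ∑ j, A i j * u j ^ 2 = ∑ i, ∑ j, A i j * u i ^ 2 := by
    rw [sum_comm]
    exact sum_congr rfl fun i _ => sum_congr rfl fun j _ => by rw [hA.apply]
  have hexpand : ∑ i, ∑ j, A i j * (u i - u j) ^ 2 = ∑ i, ∑ j, A i j * u i ^ 2
      + ∑ i, ∑ j, A i j * u j ^ 2 - 2 * ∑ i, ∑ j, A i j * (u i * u j) := by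
    simp only [mul_sum, ← sum_add_distrib, ← sum_sub_distrib]
    exact sum_congr rfl fun i _ => sum_congr rfl fun j _ => by ring
  have hquad : u ⬝ᵥ (A *ᵥ u) = ∑ i, ∑ j, A i j * (u i * u j) := by
    simp only [dotProduct, mulVec, mul_sum]
    exact sum_congr rfl fun i _ => sum_congr rfl fun j _ => by ring
  rw [hexpand, hswap, hquad]
  simp only [sum_mul]
  ring

lemma dotProduct_mulVec_nonneg_of_offDiag_nonpos {A : Matrix ι ι ℝ} (hA : A.IsSymm)
    (hoff : ∀ i j, i ≠ j → A i j ≤ 0) (hrow : ∀ i, 0 ≤ ∑ j, A i j) (u : ι → ℝ) :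
    0 ≤ u ⬝ᵥ (A *ᵥ u) := by
  rw [dotProduct_mulVec_self_eq_of_isSymm hA]
  have hdiag : 0 ≤ ∑ i, (∑ j, A i j) * u i ^ 2 :=
    sum_nonneg fun i _ => mul_nonneg (hrow i) (sq_nonneg _)
  have hoffdiag : ∑ i, ∑ j, A i j * (u i - u j) ^ 2 ≤ 0 := by
    refine sum_nonpos fun i _ => sum_nonpos fun j _ => ?_
    rcases eq_or_ne i j with rfl | hij
    · simp
    · exact mul_nonpos_of_nonpos_of_nonneg (hoff i j hij) (sq_nonneg _)
  linarith

end DiagonalDominance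

lemma two_mul_sum_le_sum_add_sum {t ℓ r : ℕ → ℝ} {L R : ℕ} {B : ℝ} (ht : ∀ k, t k ≤ 0)
    (hℓ : ∀ k < L, ℓ k ≤ 2 * B) (hr : ∀ k < R, r k ≤ 2 * B)
    (hpair : ∀ k < min L R, ℓ k + r k ≤ 2 * B) :
    2 * B * ∑ k ∈ range (max L R), t k ≤ ∑ k ∈ range L, t k * ℓ k + ∑ k ∈ range R, t k * r k := by
  wlog hLR : L ≤ R generalizing L R ℓ r
  · rw [max_comm, add_comm]
    exact this hr hℓ (fun k hk => by rw [min_comm] at hk; linarith [hpair k hk]) (by omega)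
  rw [max_eq_right hLR, ← sum_range_add_sum_Ico _ hLR, ← sum_range_add_sum_Ico _ hLR, mul_add,
    mul_sum, mul_sum, ← add_assoc, ← sum_add_distrib]
  refine add_le_add (sum_le_sum fun k hk => ?_) (sum_le_sum fun k hk => ?_)
  · have hk : k < min L R := by rw [min_eq_left hLR]; exact mem_range.1 hk
    nlinarith [ht k, hpair k hk]
  · nlinarith [ht k, hr k (mem_Ico.1 hk).2]

lemma sum_range_eq_sum_sub_add_add_sum_add {M : Type*} [AddCommMonoid M] (f : ℕ → M) {i n : ℕ}
    (hi : i < n) : ∑ j ∈ range n, f j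
      = ∑ k ∈ range i, f (i - (k + 1)) + f i + ∑ k ∈ range (n - 1 - i), f (i + (k + 1)) := by
  rw [← sum_range_add_sum_Ico f hi, sum_range_succ, ← sum_range_reflect, sum_Ico_eq_sum_range,
    show n - (i + 1) = n - 1 - i by omega]
  congr 2
  · exact sum_congr rfl fun k hk => by rw [show i - 1 - k = i - (k + 1) by omega]
  · ext k; congr 1; omega

section Toeplitz

variable {t d : ℕ → ℝ} {c : ℝ} {M : ℕ}

lemma sum_range_mul_dist_nonneg (ht : ∀ k, t (k + 1) ≤ 0)
    (hsum : ∀ N, 0 ≤ t 0 + 2 * ∑ k ∈ range N, t (k + 1))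
    (hd : ∀ j < M, 0 ≤ d j) (hdc : ∀ j < M, d j ^ 2 ≤ c) {i : ℕ} (hi : i < M)
    (hconv : ∀ k ≤ i, i + k < M → 2 * d i ≤ d (i - k) + d (i + k)) :
    0 ≤ ∑ j ∈ range M, (2 * c - d i * d j) * t (Nat.dist i j) := by
  set B := 2 * c - d i ^ 2
  have hB : 0 ≤ B := by linarith [hdc i hi, sq_nonneg (d i)]
  have hone (j : ℕ) (hj : j < M) : 2 * c - d i * d j ≤ 2 * B := by
    nlinarith [mul_nonneg (hd i hi) (hd j hj), hdc i hi]
  have hleft : ∑ k ∈ range i, (2 * c - d i * d (i - (k + 1))) * t (Nat.dist i (i - (k + 1)))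
      = ∑ k ∈ range i, t (k + 1) * (2 * c - d i * d (i - (k + 1))) :=
    sum_congr rfl fun k hk => by
      rw [Nat.dist_eq_sub_of_le_right (by omega), show i - (i - (k + 1)) = k + 1 by
        have := mem_range.1 hk; omega, mul_comm]
  have hright : ∑ k ∈ range (M - 1 - i), (2 * c - d i * d (i + (k + 1))) * t (Nat.dist i (i + (k + 1)))
      = ∑ k ∈ range (M - 1 - i), t (k + 1) * (2 * c - d i * d (i + (k + 1))) :=
    sum_congr rfl fun k _ => by
      rw [Nat.dist_eq_sub_of_le (by omega), Nat.add_sub_cancel_left, mul_comm]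
  have hpaired := two_mul_sum_le_sum_add_sum (t := fun k => t (k + 1)) (B := B)
    (ℓ := fun k => 2 * c - d i * d (i - (k + 1))) (r := fun k => 2 * c - d i * d (i + (k + 1)))
    (L := i) (R := M - 1 - i) ht (fun k _ => hone _ (by omega)) (fun k _ => hone _ (by omega))
    (fun k hk => by
      have hk := lt_min_iff.1 hk
      nlinarith [mul_le_mul_of_nonneg_left (hconv (k + 1) (by omega) (by omega)) (hd i hi)])
  rw [sum_range_eq_sum_sub_add_add_sum_add _ hi, hleft, hright, Nat.dist_self]
  nlinarith [mul_nonneg hB (hsum (max i (M - 1 - i)))]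

lemma dotProduct_diagonal_mul_symmToeplitz_mul_diagonal_le (ht : ∀ k, t (k + 1) ≤ 0)
    (hsum : ∀ N, 0 ≤ t 0 + 2 * ∑ k ∈ range N, t (k + 1))
    (hd : ∀ j < M, 0 ≤ d j) (hdc : ∀ j < M, d j ^ 2 ≤ c)
    (hconv : ∀ i k, k ≤ i → i + k < M → 2 * d i ≤ d (i - k) + d (i + k)) (u : Fin M → ℝ) :
    u ⬝ᵥ ((diagonal (fun i : Fin M => d i) * symmToeplitz t M * diagonal (fun i : Fin M => d i))
      *ᵥ u) ≤ 2 * c * (u ⬝ᵥ (symmToeplitz t M *ᵥ u)) := by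
  set E := (2 * c) • symmToeplitz t M
    - diagonal (fun i : Fin M => d i) * symmToeplitz t M * diagonal (fun i : Fin M => d i)
  have hE (i j : Fin M) : E i j = (2 * c - d i * d j) * t (Nat.dist i j) := by
    simp only [E, Matrix.sub_apply, Matrix.smul_apply, diagonal_mul, mul_diagonal, symmToeplitz, of_apply,
      smul_eq_mul]
    ring
  have hsymm : E.IsSymm := by
    ext i j
    rw [transpose_apply, hE, hE, Nat.dist_comm, mul_comm (d j)]
  have hoff (i j : Fin M) (hij : i ≠ j) : E i j ≤ 0 := by
    obtain ⟨k, hk⟩ := Nat.exists_eq_add_of_lt (Nat.dist_pos_of_ne (Fin.val_ne_of_ne hij))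
    rw [hE, hk, zero_add]
    refine mul_nonpos_of_nonneg_of_nonpos ?_ (ht k)
    nlinarith [hdc i i.2, hdc j j.2, sq_nonneg (d i - d j)]
  have hrow (i : Fin M) : 0 ≤ ∑ j, E i j := by
    simp only [hE]
    rw [Fin.sum_univ_eq_sum_range (fun j => (2 * c - d i * d j) * t (Nat.dist i j))]
    exact sum_range_mul_dist_nonneg ht hsum hd hdc i.2 (hconv i)
  have := dotProduct_mulVec_nonneg_of_offDiag_nonpos hsymm hoff hrow u
  rw [sub_mulVec, dotProduct_sub, smul_mulVec, dotProduct_smul, smul_eq_mul] at this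
  linarith

end Toeplitz

lemma ConvexOn.two_mul_le_add {s : Set ℝ} {f : ℝ → ℝ} (hf : ConvexOn ℝ s f) {x y : ℝ}
    (hx : x ∈ s) (hy : y ∈ s) : 2 * f ((x + y) / 2) ≤ f x + f y := by
  have := hf.2 hx hy (by norm_num : (0 : ℝ) ≤ 1 / 2) (by norm_num : (0 : ℝ) ≤ 1 / 2) (by norm_num)
  rw [smul_eq_mul, smul_eq_mul, smul_eq_mul, smul_eq_mul, ← mul_add, one_div_mul_eq_div] at this
  linarith

/-- If `d̃` is convex and nonnegative on `(x_L,x_R)`, or concave and nonpositive there, then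
`uᵀ D̃ G D̃ u ≤ 2 (max_i |d̃(x_i)|²) uᵀ G u` where `G = -G_α - G_αᵀ`,
`D̃ = diag(d̃(x_1),…,d̃(x_M))` and `x_i = x_L + i h`, `h = (x_R - x_L)/(M+1)`. -/
theorem diag_G_diag_bound (α : ℝ) (hα : α ∈ Set.Ioo (1 : ℝ) 2)
    (xL xR : ℝ) (hx : xL < xR) (M : ℕ) (hM : 0 < M) (dt : ℝ → ℝ)
    (hd : (ConvexOn ℝ (Set.Ioo xL xR) dt ∧ ∀ x ∈ Set.Ioo xL xR, 0 ≤ dt x) ∨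
          (ConcaveOn ℝ (Set.Ioo xL xR) dt ∧ ∀ x ∈ Set.Ioo xL xR, dt x ≤ 0))
    (u : Fin M → ℝ) :
    let h := (xR - xL) / (M + 1)
    let X : Fin M → ℝ := fun i => xL + ((i : ℕ) + 1) * h
    let Dt : Matrix (Fin M) (Fin M) ℝ := Matrix.diagonal fun i => dt (X i)
    let G : Matrix (Fin M) (Fin M) ℝ := -(Gmat α M) - (Gmat α M)ᵀ
    u ⬝ᵥ ((Dt * G * Dt) *ᵥ u) ≤
      2 * (Finset.univ.sup' ⟨⟨0, hM⟩, Finset.mem_univ _⟩ fun i => |dt (X i)| ^ 2) *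
        (u ⬝ᵥ (G *ᵥ u)) := by
  intro h X Dt G
  set c := univ.sup' ⟨⟨0, hM⟩, mem_univ _⟩ fun i => |dt (X i)| ^ 2
  set x : ℕ → ℝ := fun j => xL + (j + 1) * h
  have hh : 0 < h := div_pos (by linarith) (by positivity)
  have hx_mem (j : ℕ) (hj : j < M) : x j ∈ Set.Ioo xL xR := by
    have hjM : (j : ℝ) + 1 ≤ M := by exact_mod_cast hj
    have hMh : (M + 1) * h = xR - xL := by simp only [h]; field_simp
    constructor <;> nlinarith
  have hx_mid (i k : ℕ) (hk : k ≤ i) : (x (i - k) + x (i + k)) / 2 = x i := by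
    simp only [x, Nat.cast_sub hk, Nat.cast_add]; ring
  have hc (j : ℕ) (hj : j < M) : |dt (x j)| ^ 2 ≤ c :=
    le_sup' (fun i : Fin M => |dt (X i)| ^ 2) (mem_univ ⟨j, hj⟩)
  have key (f : ℝ → ℝ) (hf : ConvexOn ℝ (Set.Ioo xL xR) f) (hf0 : ∀ y ∈ Set.Ioo xL xR, 0 ≤ f y)
      (hfc : ∀ j < M, f (x j) ^ 2 ≤ c) :
      u ⬝ᵥ ((diagonal (fun i : Fin M => f (x i)) * G * diagonal (fun i : Fin M => f (x i))) *ᵥ u)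
        ≤ 2 * c * (u ⬝ᵥ (G *ᵥ u)) := by
    rw [show G = symmToeplitz (bandCoef α) M from neg_Gmat_sub_transpose M]
    refine dotProduct_diagonal_mul_symmToeplitz_mul_diagonal_le
      (bandCoef_succ_nonpos hα.1.le hα.2.le) (bandCoef_zero_add_two_mul_sum_nonneg hα.1.le hα.2.le)
      (fun j hj => hf0 _ (hx_mem j hj)) hfc (fun i k hk hik => ?_) u
    rw [← hx_mid i k hk]
    exact hf.two_mul_le_add (hx_mem _ (by omega)) (hx_mem _ hik)
  rcases hd with ⟨hcv, hnn⟩ | ⟨hcc, hnp⟩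
  · exact key dt hcv hnn fun j hj => by simpa only [sq_abs] using hc j hj
  · have := key (-dt) hcc.neg (fun y hy => neg_nonneg.2 (hnp y hy))
      fun j hj => by simpa only [Pi.neg_apply, neg_sq, sq_abs] using hc j hj
    simpa only [Pi.neg_apply, ← diagonal_neg, neg_mul, mul_neg, neg_neg] using this
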